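/- For n even, the number of distinct values of the sum of squares of scores over all n-tournaments is 2·C(n/2 + 1, 3) + 1. -/

import Mathlib

/-!
Since `∑ v, s v = n.choose 2` and `s ^ 2 = 2 * s.choose 2 + s`, the sum of the squared scores
is `2 * Q + n.choose 2`, where `Q = ∑ v, (s v).choose 2` counts the transitive triples. So it
suffices to show that for `n = 2 * m` the values of `Q` are exactly the integers in
`[m * (m - 1) ^ 2, (2 * m).choose 3]`. The upper bound holds because a 3-set has at most one
vertex beating the other two, the lower bound by convexity of `s ↦ s.choose 2` with the score
sum fixed. Conversely, adding two vertices such that every old vertex beats exactly one of them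
shifts `Q` by `(2 * m).choose 2 + m ^ 2`, which carries the interval for `m` onto the lower part
of the interval for `m + 1`; the remaining top part is realised by adding to the transitive
tournament on `2 * m + 1` vertices one vertex that loses to the `i` lowest vertices and to one
further vertex.
-/

def IsTournament {n : ℕ} (r : Fin n → Fin n → Prop) : Prop :=
  (∀ i, ¬ r i i) ∧ ∀ i j : Fin n, i ≠ j → (r i j ↔ ¬ r j i)

noncomputable def score {n : ℕ} (r : Fin n → Fin n → Prop) (v : Fin n) : ℕ :=
  Nat.card {j : Fin n // r v j}

open Finset

lemma Nat.add_one_choose_two (s : ℕ) : (s + 1).choose 2 = s.choose 2 + s := by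
  rw [Nat.choose_succ_succ', Nat.choose_one_right, add_comm]

lemma Nat.sq_eq_two_mul_choose_two_add (s : ℕ) : s ^ 2 = 2 * s.choose 2 + s := by
  induction s with
  | zero => rfl
  | succ s ih => rw [Nat.add_one_choose_two]; nlinarith

lemma Nat.mul_le_choose_two_add_choose_two (a s : ℕ) : a * s ≤ s.choose 2 + (a + 1).choose 2 := by
  have hs := Nat.sq_eq_two_mul_choose_two_add s
  have ha := Nat.sq_eq_two_mul_choose_two_add (a + 1)
  rcases le_or_gt s a with h | h <;> nlinarith

lemma Nat.sum_range_choose_eq_choose_succ (n k : ℕ) :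
    ∑ a ∈ range n, a.choose k = n.choose (k + 1) := by
  induction n with
  | zero => simp
  | succ n ih => rw [sum_range_succ, ih, Nat.choose_succ_succ' n k, add_comm]

lemma Nat.choose_three_two_mul (m : ℕ) :
    (2 * m).choose 3 = m * (m - 1) ^ 2 + 2 * (m + 1).choose 3 := by
  rcases m with _ | m
  · rfl
  · have h₁ := Nat.cast_choose_eq_descPochhammer_div ℚ (2 * (m + 1)) 3
    have h₂ := Nat.cast_choose_eq_descPochhammer_div ℚ (m + 1 + 1) 3
    simp [descPochhammer_succ_right, Nat.factorial] at h₁ h₂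
    apply Nat.cast_injective (R := ℚ)
    push_cast [h₁, h₂]
    ring

section Tournament

variable {n : ℕ} {r : Fin n → Fin n → Prop}

lemma score_eq_card (v : Fin n) [DecidablePred (r v)] :
    score r v = #{j | r v j} := by
  rw [score, Nat.card_eq_fintype_card, Fintype.card_subtype]

lemma IsTournament.sum_score (h : IsTournament r) : ∑ v, score r v = n.choose 2 := by
  classical
  have hpair (v j : Fin n) :
      ((if r v j then 1 else 0) + if r j v then 1 else 0) = if v ≠ j then 1 else 0 := by
    by_cases hvj : v = j
    · simp [hvj, h.1 j]
    · have hvj' := h.2 v j hvj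
      by_cases hr : r v j
      · simp [hr, hvj, hvj'.mp hr]
      · simp [hr, hvj, not_not.mp (hvj'.not.mp hr)]
  have htwice : 2 * ∑ v, score r v = n * (n - 1) := by
    calc 2 * ∑ v, score r v
        = ∑ v, ∑ j, (if r v j then 1 else 0) + ∑ v, ∑ j, (if r j v then 1 else 0) := by
          simp only [score_eq_card, card_filter]
          rw [two_mul, sum_comm (f := fun v j => if r j v then 1 else 0)]
      _ = ∑ v : Fin n, ∑ j : Fin n, if v ≠ j then 1 else 0 := by
          rw [← sum_add_distrib]
          simp_rw [← sum_add_distrib, hpair]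
      _ = n * (n - 1) := by
          simp only [sum_boole, Nat.cast_id, filter_ne, card_erase_of_mem (mem_univ _), card_univ,
            Fintype.card_fin, sum_const, smul_eq_mul]
  rw [Nat.choose_two_right, ← htwice, Nat.mul_div_cancel_left _ two_pos]

lemma IsTournament.sum_choose_score_le (h : IsTournament r) :
    ∑ v, (score r v).choose 2 ≤ n.choose 3 := by
  classical
  have hsource {v : Fin n} {q : Finset (Fin n)} (hq : q ⊆ ({j | r v j} : Finset (Fin n))) : v ∉ q :=
    fun hv => h.1 v (mem_filter.mp (hq hv)).2
  calc ∑ v, (score r v).choose 2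
      = #(univ.sigma fun v => ({j | r v j} : Finset (Fin n)).powersetCard 2) := by
        simp [card_sigma, score_eq_card]
    _ ≤ #((univ : Finset (Fin n)).powersetCard 3) := by
        refine card_le_card_of_injOn (fun p => insert p.1 p.2) ?_ ?_
        · rintro ⟨v, q⟩ hp
          simp only [coe_sigma, Set.mem_sigma_iff, mem_coe, mem_univ, mem_powersetCard,
            true_and] at hp
          simp [card_insert_of_notMem (hsource hp.1), hp.2]
        · rintro ⟨v, q⟩ hp ⟨v', q'⟩ hp' heq
          simp only [coe_sigma, Set.mem_sigma_iff, mem_coe, mem_univ, mem_powersetCard,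
            true_and] at hp hp' heq
          by_cases hvv : v = v'
          · subst hvv
            rw [← erase_insert (hsource hp.1), heq, erase_insert (hsource hp'.1)]
          · have hv' : v' ∈ q :=
              (mem_insert.mp (heq ▸ mem_insert_self v' q')).resolve_left (Ne.symm hvv)
            have hv : v ∈ q' :=
              (mem_insert.mp (heq.symm ▸ mem_insert_self v q)).resolve_left hvv
            exact absurd (mem_filter.mp (hp'.1 hv)).2
              ((h.2 v v' hvv).mp (mem_filter.mp (hp.1 hv')).2)
    _ = n.choose 3 := by simp

lemma IsTournament.sum_sq_score (h : IsTournament r) :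
    ∑ v, score r v ^ 2 = 2 * ∑ v, (score r v).choose 2 + n.choose 2 := by
  simp only [Nat.sq_eq_two_mul_choose_two_add, sum_add_distrib, ← mul_sum, h.sum_score]

lemma IsTournament.mul_choose_two_le (h : IsTournament r) (a : ℕ) :
    a * n.choose 2 ≤ ∑ v, (score r v).choose 2 + n * (a + 1).choose 2 := by
  calc a * n.choose 2 = ∑ v, a * score r v := by rw [← mul_sum, h.sum_score]
    _ ≤ ∑ v, ((score r v).choose 2 + (a + 1).choose 2) :=
        sum_le_sum fun v _ => Nat.mul_le_choose_two_add_choose_two a _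
    _ = _ := by simp [sum_add_distrib]

lemma IsTournament.le_sum_choose_score {m : ℕ} (h : IsTournament r) (hn : n = 2 * m) :
    m * (m - 1) ^ 2 ≤ ∑ v, (score r v).choose 2 := by
  obtain _ | m := m
  · simp
  have hconv := h.mul_choose_two_le m
  subst hn
  have h₁ := Nat.sq_eq_two_mul_choose_two_add (2 * (m + 1))
  have h₂ := Nat.sq_eq_two_mul_choose_two_add (m + 1)
  simp only [Nat.add_sub_cancel]
  nlinarith

def transitiveTournament (n : ℕ) : Fin n → Fin n → Prop := fun i j => j < i

lemma isTournament_transitiveTournament : IsTournament (transitiveTournament n) :=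
  ⟨fun i => lt_irrefl i,
    fun _ _ hij => ⟨lt_asymm, fun h => (not_lt.mp h).lt_of_ne hij.symm⟩⟩

lemma score_transitiveTournament (i : Fin n) : score (transitiveTournament n) i = i := by
  show Nat.card {j : Fin n // j < i} = i
  rw [Nat.card_eq_fintype_card, Fintype.card_subtype]
  exact (congrArg card (filter_gt_eq_Iio (a := i))).trans (Fin.card_Iio i)

lemma sum_choose_score_transitiveTournament :
    ∑ v, (score (transitiveTournament n) v).choose 2 = n.choose 3 := by
  simp only [score_transitiveTournament]
  rw [Fin.sum_univ_eq_sum_range (fun a => a.choose 2), Nat.sum_range_choose_eq_choose_succ]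

/-- The new vertex `Fin.last n` beats exactly the vertices in `B`. -/
def extendTournament (r : Fin n → Fin n → Prop) (B : Finset (Fin n)) :
    Fin (n + 1) → Fin (n + 1) → Prop :=
  Fin.lastCases (Fin.lastCases False (· ∈ B)) fun i => Fin.lastCases (i ∉ B) (r i)

lemma IsTournament.extend (h : IsTournament r) (B : Finset (Fin n)) :
    IsTournament (extendTournament r B) := by
  refine ⟨fun i => ?_, fun i j hij => ?_⟩
  · cases i using Fin.lastCases <;> simp [extendTournament, h.1]
  · cases i using Fin.lastCases <;> cases j using Fin.lastCases <;>
      simp_all [extendTournament, h.2]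

section Extension

variable {B : Finset (Fin n)}

lemma score_extendTournament_last : score (extendTournament r B) (Fin.last n) = #B := by
  classical
  rw [score_eq_card, card_filter, Fin.sum_univ_castSucc]
  simp [extendTournament]

lemma score_extendTournament_castSucc (x : Fin n) :
    score (extendTournament r B) x.castSucc = score r x + if x ∈ B then 0 else 1 := by
  classical
  rw [score_eq_card, score_eq_card, card_filter, card_filter, Fin.sum_univ_castSucc]
  simp [extendTournament]

lemma sum_choose_score_extendTournament :
    ∑ v, (score (extendTournament r B) v).choose 2
      = ∑ v, (score r v).choose 2 + ∑ x ∈ Bᶜ, score r x + (#B).choose 2 := by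
  have hstep (x : Fin n) : (score r x + if x ∈ B then 0 else 1).choose 2
      = (score r x).choose 2 + if x ∈ Bᶜ then score r x else 0 := by
    by_cases hx : x ∈ B <;> simp [hx, Nat.add_one_choose_two]
  simp only [Fin.sum_univ_castSucc, score_extendTournament_castSucc, score_extendTournament_last,
    hstep, sum_add_distrib, sum_ite_mem, univ_inter]

end Extension

lemma IsTournament.exists_balanced_extension {m : ℕ} (h : IsTournament r) (hn : n = 2 * m) :
    ∃ r' : Fin (n + 1 + 1) → Fin (n + 1 + 1) → Prop, IsTournament r' ∧
      ∑ v, (score r' v).choose 2 = ∑ v, (score r v).choose 2 + n.choose 2 + m ^ 2 := by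
  classical
  let A : Finset (Fin n) := {x | m ≤ x.val}
  let A' : Finset (Fin (n + 1)) := {y | y.val < m}
  refine ⟨extendTournament (extendTournament r A) A', (h.extend A).extend A', ?_⟩
  have hA : #A = m := by
    show #({x | m ≤ x.val} : Finset (Fin n)) = m
    have := card_filter_add_card_filter_not (s := univ) (fun x : Fin n => x.val < m)
    simp only [Fin.card_filter_val_lt, not_lt, card_univ, Fintype.card_fin] at this
    omega
  have hA' : #A' = m := by simp only [A', Fin.card_filter_val_lt]; omega
  have hA'c : ∑ y ∈ A'ᶜ, score (extendTournament r A) y = ∑ x ∈ A, score r x + m := by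
    simp only [A', compl_filter, sum_filter, Fin.sum_univ_castSucc, Fin.val_castSucc, Fin.val_last,
      not_lt, score_extendTournament_castSucc, score_extendTournament_last, hA]
    rw [if_pos (by omega), sum_filter]
    congr 1
    refine sum_congr rfl fun x _ => ?_
    split_ifs <;> simp_all [A]
  rw [sum_choose_score_extendTournament, sum_choose_score_extendTournament, hA'c, hA, hA']
  have hsplit := sum_compl_add_sum A (score r)
  have hsum := h.sum_score
  have hsq := Nat.sq_eq_two_mul_choose_two_add m
  omega

end Tournament

-- For fixed `i` the values form an interval of length `2 * m - i`, and consecutive intervals overlap.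
lemma exists_eq_choose_two_add_choose_two_add {m p : ℕ} (hlo : m ^ 2 ≤ p)
    (hhi : p ≤ (2 * m + 1).choose 2) :
    ∃ i u, i + u < 2 * m + 1 ∧ p = (i + 1).choose 2 + u + (2 * m + 1 - (i + 1)).choose 2 := by
  suffices key : ∀ j ≤ m, (j + 1).choose 2 + (2 * m - j).choose 2 ≤ p →
      ∃ i u, i + u < 2 * m + 1 ∧ p = (i + 1).choose 2 + u + (2 * m - i).choose 2 by
    have hsq := Nat.sq_eq_two_mul_choose_two_add m
    obtain ⟨i, u, hiu, hp⟩ := key m le_rfl (by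
      rw [two_mul, Nat.add_sub_cancel, Nat.add_one_choose_two]; omega)
    exact ⟨i, u, hiu, by rwa [Nat.add_sub_add_right]⟩
  intro j
  induction j with
  | zero =>
    intro _ hp
    have := Nat.add_one_choose_two (2 * m)
    simp only [zero_add, Nat.sub_zero] at hp ⊢
    exact ⟨0, p - (2 * m).choose 2, by omega, by simp; omega⟩
  | succ j ih =>
    intro hj hp
    by_cases hprev : (j + 1).choose 2 + (2 * m - j).choose 2 ≤ p
    · exact ih (by omega) hprev
    · have h1 := Nat.add_one_choose_two (j + 1)
      have h2 := Nat.add_one_choose_two (2 * m - (j + 1))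
      rw [show 2 * m - (j + 1) + 1 = 2 * m - j by omega] at h2
      exact ⟨j + 1, p - ((j + 1 + 1).choose 2 + (2 * m - (j + 1)).choose 2), by omega, by omega⟩

lemma exists_extend_transitiveTournament {N i u : ℕ} (h : i + u < N) :
    ∃ r : Fin (N + 1) → Fin (N + 1) → Prop, IsTournament r ∧
      ∑ v, (score r v).choose 2 = N.choose 3 + (i + 1).choose 2 + u + (N - (i + 1)).choose 2 := by
  classical
  let C : Finset (Fin N) := {x | x.val < i ∨ x.val = i + u}
  refine ⟨extendTournament (transitiveTournament N) Cᶜ,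
    isTournament_transitiveTournament.extend _, ?_⟩
  have hrange : (range N).filter (fun a => a < i ∨ a = i + u) = insert (i + u) (range i) := by
    ext a; simp only [mem_filter, mem_range, mem_insert]; omega
  have hsum (f : ℕ → ℕ) : ∑ x ∈ C, f x = f (i + u) + ∑ a ∈ range i, f a := by
    rw [sum_filter, Fin.sum_univ_eq_sum_range (fun a => if a < i ∨ a = i + u then f a else 0),
      ← sum_filter, hrange, sum_insert (by simp)]
  have hcard : #C = i + 1 := by
    rw [card_eq_sum_ones, hsum (fun _ => 1)]
    simp [add_comm]
  rw [sum_choose_score_extendTournament, compl_compl, card_compl, Fintype.card_fin, hcard,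
    sum_choose_score_transitiveTournament]
  simp only [score_transitiveTournament]
  have hval : ∑ x ∈ C, (x : ℕ) = i + u + ∑ a ∈ range i, a := hsum fun a => a
  have hgauss := Nat.sum_range_choose_eq_choose_succ i 1
  simp only [Nat.choose_one_right] at hgauss
  rw [hval, hgauss, Nat.add_one_choose_two]
  ring

theorem setOf_sum_choose_score_eq_Icc (m : ℕ) :
    {q | ∃ r : Fin (2 * m) → Fin (2 * m) → Prop,
        IsTournament r ∧ ∑ v, (score r v).choose 2 = q}
      = Set.Icc (m * (m - 1) ^ 2) ((2 * m).choose 3) := by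
  ext q
  refine ⟨fun ⟨r, hr, hq⟩ => hq ▸ ⟨hr.le_sum_choose_score rfl, hr.sum_choose_score_le⟩, ?_⟩
  rintro ⟨hlo, hhi⟩
  induction m generalizing q with
  | zero =>
    exact ⟨transitiveTournament 0, isTournament_transitiveTournament, by simp_all⟩
  | succ m ih =>
    have hlow : m * (m - 1) ^ 2 + (2 * m).choose 2 + m ^ 2 = (m + 1) * m ^ 2 := by
      rcases m with _ | m
      · simp
      · simp only [Nat.add_sub_cancel]
        linarith [Nat.sq_eq_two_mul_choose_two_add (2 * (m + 1))]
    have hpascal₁ : (2 * m + 1).choose 3 = (2 * m).choose 2 + (2 * m).choose 3 :=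
      Nat.choose_succ_succ' _ _
    have hpascal₂ : (2 * m + 1 + 1).choose 3 = (2 * m + 1).choose 2 + (2 * m + 1).choose 3 :=
      Nat.choose_succ_succ' _ _
    simp only [Nat.add_sub_cancel] at hlo
    rw [show 2 * (m + 1) = 2 * m + 1 + 1 by ring] at hhi ⊢
    by_cases hbal : q ≤ (2 * m).choose 3 + (2 * m).choose 2 + m ^ 2
    · obtain ⟨r, hr, hq⟩ := ih (q - (2 * m).choose 2 - m ^ 2) (by omega) (by omega)
      obtain ⟨r', hr', hq'⟩ := hr.exists_balanced_extension rfl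
      exact ⟨r', hr', by omega⟩
    · obtain ⟨i, u, hiu, hp⟩ := exists_eq_choose_two_add_choose_two_add
        (p := q - (2 * m + 1).choose 3) (m := m) (by omega) (by omega)
      obtain ⟨r, hr, hq⟩ := exists_extend_transitiveTournament hiu
      exact ⟨r, hr, by omega⟩

lemma setOf_sum_sq_score_eq_image (n : ℕ) :
    {v | ∃ r : Fin n → Fin n → Prop, IsTournament r ∧ ∑ i, score r i ^ 2 = v}
      = (fun q => 2 * q + n.choose 2) ''
          {q | ∃ r : Fin n → Fin n → Prop, IsTournament r ∧ ∑ v, (score r v).choose 2 = q} := by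
  ext v
  constructor
  · rintro ⟨r, hr, rfl⟩
    exact ⟨_, ⟨r, hr, rfl⟩, hr.sum_sq_score.symm⟩
  · rintro ⟨_, ⟨r, hr, rfl⟩, rfl⟩
    exact ⟨r, hr, hr.sum_sq_score⟩

theorem stmt12 {n : ℕ} (hn : Even n) :
    Set.ncard {v : ℕ | ∃ r : Fin n → Fin n → Prop,
        IsTournament r ∧ ∑ i : Fin n, (score r i) ^ 2 = v}
      = 2 * (n / 2 + 1).choose 3 + 1 := by
  obtain ⟨m, rfl⟩ := hn.two_dvd
  have hinj : Function.Injective fun q => 2 * q + (2 * m).choose 2 := fun a b h => by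
    simp only at h
    omega
  rw [setOf_sum_sq_score_eq_image, Set.ncard_image_of_injective _ hinj,
    setOf_sum_choose_score_eq_Icc, Set.ncard_Icc_nat, Nat.choose_three_two_mul,
    Nat.mul_div_cancel_left m two_pos]
  omega
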